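/- Let α ∈ (0,1), c > 0, κ > 0. Then K_α is integrable on ℝ and ∫_ℝ K_α(ξ) dξ = 0. Moreover ∫_{-∞}^0 |K_α(ξ)| dξ = (cκ)^α/(2κ²). -/

import Mathlib

open Real MeasureTheory Filter Topology

/-- The kernel K₀(ξ) = e^{-κ|ξ|}/(2κ). -/
noncomputable def K0 (κ ξ : ℝ) : ℝ := Real.exp (-κ * |ξ|) / (2 * κ)

/-- The (a.e.) derivative of K₀: K₀'(x) = -sign(x) e^{-κ|x|}/2. -/
noncomputable def K0d (κ x : ℝ) : ℝ := -Real.sign x * Real.exp (-κ * |x|) / 2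

/-- The kernel K_α(ξ) = -(c^α/Γ(1-α)) ∫₀^∞ K₀'(ξ-s) s^{-α} ds. -/
noncomputable def Kalpha (α c κ ξ : ℝ) : ℝ :=
  -(c ^ α / Real.Gamma (1 - α)) * ∫ s in Set.Ioi (0 : ℝ), K0d κ (ξ - s) / s ^ α

/-- Convolution (K * g)(ξ) = ∫ K(ξ-y) g(y) dy. -/
noncomputable def conv (K g : ℝ → ℝ) (ξ : ℝ) : ℝ := ∫ y, K (ξ - y) * g y


/-!
Integrating by parts in `s` (the boundary terms vanish because `|K₀(ξ-s) - K₀(ξ)| ≤ s/2` near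
`s = 0` and `K₀` is bounded) puts `K_α` in Marchaud form
`K_α(ξ) = c^α α / Γ(1-α) · ∫₀^∞ (K₀(ξ-s) - K₀(ξ)) s^{-1-α} ds`.
This integrand is integrable on `ℝ × (0,∞)`: for `s ≤ 1` it is `O(e^{-κ|ξ|} s^{-α})`, and for
`s ≥ 1` its two terms are integrable separately. Hence `K_α` is integrable and, by Fubini, its integral is an integral over
`s` of `∫ (K₀(ξ-s) - K₀(ξ)) dξ = 0`. For `ξ ≤ 0` the sign of `ξ - s` is constant, the defining
integral is a Gamma integral, and `K_α(ξ) = -(cκ)^α e^{κξ} / (2κ)`.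
-/

open Set

theorem abs_exp_sub_exp_le_of_le {a b m : ℝ} (ha : a ≤ m) (hb : b ≤ m) :
    |exp a - exp b| ≤ exp m * |a - b| := by
  wlog hba : b ≤ a generalizing a b
  · rw [abs_sub_comm, abs_sub_comm a]
    exact this hb ha (le_of_not_ge hba)
  have hdiff : exp a - exp b ≤ exp a * (a - b) := by
    have h := add_one_le_exp (b - a)
    have e : exp b = exp a * exp (b - a) := by rw [← exp_add]; ring_nf
    nlinarith [exp_pos a]
  rw [abs_of_nonneg (sub_nonneg.2 (exp_le_exp.2 hba)), abs_of_nonneg (sub_nonneg.2 hba)]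
  exact hdiff.trans (by gcongr)

theorem integrable_exp_neg_mul_abs {κ : ℝ} (hκ : 0 < κ) :
    Integrable fun x : ℝ => exp (-κ * |x|) := by
  rw [← integrableOn_univ, ← Iic_union_Ioi (a := (0 : ℝ))]
  refine IntegrableOn.union ?_ ?_
  · refine (integrableOn_exp_mul_Iic hκ 0).congr_fun (fun x hx => ?_) measurableSet_Iic
    rw [abs_of_nonpos (mem_Iic.1 hx), neg_mul_neg]
  · refine (integrableOn_exp_mul_Ioi (neg_lt_zero.2 hκ) 0).congr_fun (fun x hx => ?_)
      measurableSet_Ioi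
    rw [abs_of_pos hx]

theorem integral_Ioi_of_hasDerivAt_off_countable_of_tendsto {E : Type*} [NormedAddCommGroup E]
    [NormedSpace ℝ E] [CompleteSpace E] {f f' : ℝ → E} {a : ℝ} {m : E} {s : Set ℝ}
    (hs : s.Countable) (hcont : ContinuousOn f (Ici a))
    (hderiv : ∀ x ∈ Ioi a \ s, HasDerivAt f (f' x) x) (f'int : IntegrableOn f' (Ioi a))
    (hf : Tendsto f atTop (𝓝 m)) :
    ∫ x in Ioi a, f' x = m - f a := by
  refine tendsto_nhds_unique (intervalIntegral_tendsto_integral_Ioi a f'int tendsto_id) ?_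
  refine (hf.sub_const (f a)).congr' ?_
  filter_upwards [Ioi_mem_atTop a] with b hb
  refine (integral_eq_of_hasDerivAt_off_countable_of_le f f' hb.le hs
    (hcont.mono Icc_subset_Ici_self) (fun x hx => hderiv x ⟨hx.1.1, hx.2⟩) ?_).symm
  exact (intervalIntegrable_iff_integrableOn_Ioc_of_le hb.le).2
    (f'int.mono_set Ioc_subset_Ioi_self)

theorem ae_prod_restrict_snd_mem {X Y : Type*} [MeasurableSpace X] [MeasurableSpace Y]
    {μ : Measure X} {ν : Measure Y} {t : Set Y} (ht : MeasurableSet t) :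
    ∀ᵐ p ∂μ.prod (ν.restrict t), p.2 ∈ t :=
  Measure.quasiMeasurePreserving_snd.ae (ae_restrict_mem ht)

@[fun_prop]
theorem Real.measurable_sign : Measurable Real.sign :=
  Measurable.ite measurableSet_Iio measurable_const
    (Measurable.ite measurableSet_Ioi measurable_const measurable_const)

section Kernel

variable {κ : ℝ}

theorem K0_nonneg (hκ : 0 < κ) (x : ℝ) : 0 ≤ K0 κ x := by
  unfold K0
  positivity

theorem K0_le (hκ : 0 < κ) (x : ℝ) : K0 κ x ≤ 1 / (2 * κ) := by
  unfold K0
  gcongr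
  exact exp_le_one_iff.2 (by nlinarith [abs_nonneg x])

@[fun_prop]
theorem continuous_K0 (κ : ℝ) : Continuous (K0 κ) := by
  unfold K0
  fun_prop

theorem integrable_K0 (hκ : 0 < κ) : Integrable (K0 κ) :=
  (integrable_exp_neg_mul_abs hκ).div_const _

theorem abs_K0_sub_K0_le (hκ : 0 < κ) (x y : ℝ) : |K0 κ x - K0 κ y| ≤ 1 / (2 * κ) :=
  abs_sub_le_of_nonneg_of_le (K0_nonneg hκ x) (K0_le hκ x) (K0_nonneg hκ y) (K0_le hκ y)

theorem abs_K0_sub_K0_le_of_le_abs (hκ : 0 < κ) {m x y : ℝ} (hx : m ≤ |x|) (hy : m ≤ |y|) :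
    |K0 κ x - K0 κ y| ≤ exp (-κ * m) / 2 * |x - y| := by
  have hexp := abs_exp_sub_exp_le_of_le (a := -κ * |x|) (b := -κ * |y|) (m := -κ * m)
    (by nlinarith) (by nlinarith)
  have habs : |(-κ * |x|) - (-κ * |y|)| ≤ κ * |x - y| := by
    rw [← mul_sub, abs_mul, abs_neg, abs_of_pos hκ]
    exact mul_le_mul_of_nonneg_left (abs_abs_sub_abs_le_abs_sub x y) hκ.le
  unfold K0
  rw [← sub_div, abs_div, abs_of_pos (by positivity : 0 < 2 * κ), div_le_iff₀ (by positivity)]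
  calc |exp (-κ * |x|) - exp (-κ * |y|)| ≤ exp (-κ * m) * (κ * |x - y|) :=
        hexp.trans (by gcongr)
    _ = exp (-κ * m) / 2 * |x - y| * (2 * κ) := by ring

theorem abs_K0_sub_K0_le_abs_sub (hκ : 0 < κ) (x y : ℝ) : |K0 κ x - K0 κ y| ≤ |x - y| / 2 := by
  have h := abs_K0_sub_K0_le_of_le_abs hκ (abs_nonneg x) (abs_nonneg y)
  rwa [mul_zero, exp_zero, div_mul_comm, mul_one] at h

theorem hasDerivAt_K0 (hκ : κ ≠ 0) {x : ℝ} (hx : x ≠ 0) : HasDerivAt (K0 κ) (K0d κ x) x := by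
  refine ((((hasDerivAt_abs hx).const_mul (-κ)).exp).div_const (2 * κ)).congr_deriv ?_
  unfold K0d
  rcases hx.lt_or_gt with h | h
  · simp only [Real.sign_of_neg h, sign_neg h]
    field_simp
    simp
  · simp only [Real.sign_of_pos h, sign_pos h]
    field_simp
    simp

theorem abs_K0d_le (κ x : ℝ) : |K0d κ x| ≤ exp (-κ * |x|) / 2 := by
  unfold K0d
  rw [abs_div, abs_mul, abs_neg, abs_of_pos (exp_pos _), abs_two]
  gcongr
  rcases Real.sign_apply_eq x with h | h | h <;> simp [h, (exp_pos _).le]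

@[fun_prop]
theorem measurable_K0d (κ : ℝ) : Measurable (K0d κ) := by
  unfold K0d
  fun_prop

end Kernel

section Marchaud

variable {α κ : ℝ}

theorem integrableOn_K0d_sub_mul_rpow (hα : α < 1) (hκ : 0 < κ) (ξ : ℝ) :
    IntegrableOn (fun s => K0d κ (ξ - s) * s ^ (-α)) (Ioi 0) := by
  have hdom : IntegrableOn (fun s : ℝ => s ^ (-α) * exp (-κ * s)) (Ioi 0) := by
    simpa using integrableOn_rpow_mul_exp_neg_mul_rpow (p := 1) (by linarith) one_pos hκ
  refine (hdom.const_mul (exp (κ * |ξ|) / 2)).mono' (by fun_prop) ?_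
  filter_upwards [ae_restrict_mem measurableSet_Ioi] with s (hs : 0 < s)
  have hdist : s - |ξ| ≤ |ξ - s| := by
    simpa [abs_of_pos hs, abs_sub_comm] using abs_sub_abs_le_abs_sub s ξ
  have hexp : exp (-κ * |ξ - s|) ≤ exp (κ * |ξ|) * exp (-κ * s) := by
    rw [← exp_add]
    exact exp_le_exp.2 (by nlinarith)
  rw [norm_mul, norm_of_nonneg (rpow_nonneg hs.le _), Real.norm_eq_abs]
  calc |K0d κ (ξ - s)| * s ^ (-α) ≤ exp (-κ * |ξ - s|) / 2 * s ^ (-α) := by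
        gcongr
        exact abs_K0d_le κ (ξ - s)
    _ ≤ exp (κ * |ξ|) * exp (-κ * s) / 2 * s ^ (-α) := by gcongr
    _ = exp (κ * |ξ|) / 2 * (s ^ (-α) * exp (-κ * s)) := by ring

theorem integrableOn_K0_sub_mul_rpow (hα0 : 0 < α) (hα1 : α < 1) (hκ : 0 < κ) (ξ : ℝ) :
    IntegrableOn (fun s => (K0 κ (ξ - s) - K0 κ ξ) * s ^ (-α - 1)) (Ioi 0) := by
  rw [← Ioc_union_Ioi_eq_Ioi zero_le_one]
  refine IntegrableOn.union ?_ ?_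
  · have hdom : IntegrableOn (fun s : ℝ => s ^ (-α)) (Ioc 0 1) :=
      (intervalIntegrable_iff_integrableOn_Ioc_of_le zero_le_one).1
        (intervalIntegral.intervalIntegrable_rpow' (by linarith))
    refine (hdom.const_mul (1 / 2)).mono' (by fun_prop) ?_
    filter_upwards [ae_restrict_mem measurableSet_Ioc] with s hs'
    have hs : 0 < s := hs'.1
    rw [norm_mul, norm_of_nonneg (rpow_nonneg hs.le _), Real.norm_eq_abs]
    calc |K0 κ (ξ - s) - K0 κ ξ| * s ^ (-α - 1) ≤ s / 2 * s ^ (-α - 1) := by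
          gcongr
          simpa [abs_of_pos hs] using abs_K0_sub_K0_le_abs_sub hκ (ξ - s) ξ
      _ = 1 / 2 * s ^ (-α) := by
          rw [sub_eq_add_neg (-α), rpow_add hs, rpow_neg_one]
          field_simp
  · have hdom : IntegrableOn (fun s : ℝ => s ^ (-α - 1)) (Ioi 1) :=
      integrableOn_Ioi_rpow_of_lt (by linarith) one_pos
    refine (hdom.const_mul (1 / (2 * κ))).mono' (by fun_prop) ?_
    filter_upwards [ae_restrict_mem measurableSet_Ioi] with s (hs : 1 < s)
    rw [norm_mul, norm_of_nonneg (rpow_nonneg (by linarith) _), Real.norm_eq_abs]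
    gcongr
    exact abs_K0_sub_K0_le hκ _ _

theorem abs_K0_sub_mul_rpow_le (hκ : 0 < κ) (ξ : ℝ) {s : ℝ} (hs : 0 ≤ s) :
    |(K0 κ (ξ - s) - K0 κ ξ) * s ^ (-α)| ≤ s ^ (1 - α) / 2 := by
  rcases hs.eq_or_lt with rfl | hs
  · simp only [sub_zero, sub_self, zero_mul, abs_zero]
    positivity
  rw [abs_mul, abs_of_pos (rpow_pos_of_pos hs _)]
  calc |K0 κ (ξ - s) - K0 κ ξ| * s ^ (-α) ≤ s / 2 * s ^ (-α) := by
        gcongr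
        simpa [abs_of_pos hs] using abs_K0_sub_K0_le_abs_sub hκ (ξ - s) ξ
    _ = s ^ (1 - α) / 2 := by
        rw [sub_eq_add_neg, rpow_add hs, rpow_one]
        ring

theorem continuousOn_K0_sub_mul_rpow (hα : α < 1) (hκ : 0 < κ) (ξ : ℝ) :
    ContinuousOn (fun s => (K0 κ (ξ - s) - K0 κ ξ) * s ^ (-α)) (Ici 0) := by
  intro s hs
  rcases (mem_Ici.1 hs).eq_or_lt with rfl | hs
  · have hlim : Tendsto (fun s : ℝ => s ^ (1 - α) / 2) (𝓝[Ici 0] 0) (𝓝 0) := by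
      have h := ((continuousAt_rpow_const 0 (1 - α) (Or.inr (by linarith))).div_const 2).tendsto
      rw [zero_rpow (by linarith), zero_div] at h
      exact h.mono_left nhdsWithin_le_nhds
    have hF0 : (K0 κ (ξ - 0) - K0 κ ξ) * (0 : ℝ) ^ (-α) = 0 := by simp
    rw [ContinuousWithinAt, hF0]
    refine squeeze_zero_norm' ?_ hlim
    filter_upwards [self_mem_nhdsWithin] with t (ht : 0 ≤ t)
    exact abs_K0_sub_mul_rpow_le hκ ξ ht
  · exact (ContinuousAt.mul (by fun_prop) (continuousAt_rpow_const s (-α) (Or.inl hs.ne'))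
      ).continuousWithinAt

theorem tendsto_K0_sub_mul_rpow_atTop (hα : 0 < α) (hκ : 0 < κ) (ξ : ℝ) :
    Tendsto (fun s => (K0 κ (ξ - s) - K0 κ ξ) * s ^ (-α)) atTop (𝓝 0) := by
  have hlim : Tendsto (fun s : ℝ => 1 / (2 * κ) * s ^ (-α)) atTop (𝓝 0) := by
    simpa using (tendsto_rpow_neg_atTop hα).const_mul (1 / (2 * κ))
  refine squeeze_zero_norm' ?_ hlim
  filter_upwards [eventually_gt_atTop 0] with s hs
  rw [norm_mul, norm_of_nonneg (rpow_nonneg hs.le _), Real.norm_eq_abs]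
  gcongr
  exact abs_K0_sub_K0_le hκ _ _

theorem hasDerivAt_K0_sub_mul_rpow (hκ : 0 < κ) {ξ s : ℝ} (hs : 0 < s) (hξ : s ≠ ξ) :
    HasDerivAt (fun t => (K0 κ (ξ - t) - K0 κ ξ) * t ^ (-α))
      (-(K0d κ (ξ - s) * s ^ (-α)) - α * ((K0 κ (ξ - s) - K0 κ ξ) * s ^ (-α - 1))) s := by
  have hK : HasDerivAt (fun t => K0 κ (ξ - t) - K0 κ ξ) (K0d κ (ξ - s) * (-1)) s :=
    ((hasDerivAt_K0 hκ.ne' (sub_ne_zero.2 hξ.symm)).comp s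
      ((hasDerivAt_id s).const_sub ξ)).sub_const _
  have hprod : HasDerivAt (fun t => (K0 κ (ξ - t) - K0 κ ξ) * t ^ (-α)) _ s :=
    hK.mul (hasDerivAt_rpow_const (p := -α) (Or.inl hs.ne'))
  convert hprod using 1
  ring

theorem integral_K0d_sub_div_rpow (hα0 : 0 < α) (hα1 : α < 1) (hκ : 0 < κ) (ξ : ℝ) :
    ∫ s in Ioi 0, K0d κ (ξ - s) / s ^ α
      = -α * ∫ s in Ioi 0, (K0 κ (ξ - s) - K0 κ ξ) * s ^ (-α - 1) := by
  have hK0d := integrableOn_K0d_sub_mul_rpow hα1 hκ ξ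
  have hK0 := (integrableOn_K0_sub_mul_rpow hα0 hα1 hκ ξ).const_mul α
  have hparts := integral_Ioi_of_hasDerivAt_off_countable_of_tendsto (countable_singleton ξ)
    (continuousOn_K0_sub_mul_rpow hα1 hκ ξ)
    (fun s hs => hasDerivAt_K0_sub_mul_rpow hκ hs.1 hs.2) (hK0d.neg.sub hK0)
    (tendsto_K0_sub_mul_rpow_atTop hα0 hκ ξ)
  rw [integral_sub (f := fun s => -(K0d κ (ξ - s) * s ^ (-α))) hK0d.neg hK0, integral_neg,
    integral_const_mul] at hparts
  have hdiv : ∫ s in Ioi 0, K0d κ (ξ - s) / s ^ α = ∫ s in Ioi 0, K0d κ (ξ - s) * s ^ (-α) :=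
    setIntegral_congr_fun measurableSet_Ioi fun s (hs : 0 < s) => by
      rw [rpow_neg hs.le, div_eq_mul_inv]
  simp only [sub_zero, sub_self, zero_mul] at hparts
  linarith

theorem Kalpha_eq_mul_integral (hα0 : 0 < α) (hα1 : α < 1) (hκ : 0 < κ) (c ξ : ℝ) :
    Kalpha α c κ ξ
      = c ^ α * α / Gamma (1 - α) * ∫ s in Ioi 0, (K0 κ (ξ - s) - K0 κ ξ) * s ^ (-α - 1) := by
  rw [Kalpha, integral_K0d_sub_div_rpow hα0 hα1 hκ ξ]
  ring

end Marchaud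

section Fubini

variable {α κ : ℝ}

theorem integrable_K0_sub_mul_rpow_prod_Ioc (hα : α < 1) (hκ : 0 < κ) :
    Integrable (fun p : ℝ × ℝ => (K0 κ (p.1 - p.2) - K0 κ p.1) * p.2 ^ (-α - 1))
      (volume.prod (volume.restrict (Ioc 0 1))) := by
  have hdom : Integrable (fun p : ℝ × ℝ => exp κ / 2 * exp (-κ * |p.1|) * p.2 ^ (-α))
      (volume.prod (volume.restrict (Ioc 0 1))) :=
    ((integrable_exp_neg_mul_abs hκ).const_mul _).mul_prod
      ((intervalIntegrable_iff_integrableOn_Ioc_of_le zero_le_one).1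
        (intervalIntegral.intervalIntegrable_rpow' (by linarith)))
  refine hdom.mono' (Measurable.aestronglyMeasurable (by fun_prop)) ?_
  filter_upwards [ae_prod_restrict_snd_mem measurableSet_Ioc] with ⟨x, s⟩ ⟨hs0, hs1⟩
  have hdist : |x| - s ≤ |x - s| := by
    simpa [abs_of_pos hs0] using abs_sub_abs_le_abs_sub x s
  have hK := abs_K0_sub_K0_le_of_le_abs hκ hdist (by linarith : |x| - s ≤ |x|)
  rw [sub_sub_cancel_left, abs_neg, abs_of_pos hs0] at hK
  have hexp : exp (-κ * (|x| - s)) ≤ exp κ * exp (-κ * |x|) := by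
    rw [← exp_add]
    exact exp_le_exp.2 (by nlinarith)
  rw [norm_mul, norm_of_nonneg (rpow_nonneg hs0.le _), Real.norm_eq_abs]
  calc |K0 κ (x - s) - K0 κ x| * s ^ (-α - 1) ≤ exp (-κ * (|x| - s)) / 2 * s * s ^ (-α - 1) := by
        gcongr
    _ ≤ exp κ * exp (-κ * |x|) / 2 * s * s ^ (-α - 1) := by gcongr
    _ = exp κ / 2 * exp (-κ * |x|) * s ^ (-α) := by
        rw [sub_eq_add_neg (-α), rpow_add hs0, rpow_neg_one]
        field_simp

theorem integrable_K0_sub_mul_rpow_prod_Ioi (hα : 0 < α) (hκ : 0 < κ) :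
    Integrable (fun p : ℝ × ℝ => (K0 κ (p.1 - p.2) - K0 κ p.1) * p.2 ^ (-α - 1))
      (volume.prod (volume.restrict (Ioi 1))) := by
  have hK0 : Integrable (fun p : ℝ × ℝ => K0 κ p.1 * p.2 ^ (-α - 1))
      (volume.prod (volume.restrict (Ioi 1))) :=
    (integrable_K0 hκ).mul_prod (integrableOn_Ioi_rpow_of_lt (by linarith) one_pos)
  have hshift : Integrable (fun p : ℝ × ℝ => K0 κ (p.1 - p.2) * p.2 ^ (-α - 1))
      (volume.prod (volume.restrict (Ioi 1))) :=
    ((measurePreserving_sub_prod _ _).integrable_comp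
      (Measurable.aestronglyMeasurable (by fun_prop))).2 hK0
  simpa only [sub_mul, Pi.sub_def] using hshift.sub hK0

theorem integrable_K0_sub_mul_rpow_prod (hα0 : 0 < α) (hα1 : α < 1) (hκ : 0 < κ) :
    Integrable (fun p : ℝ × ℝ => (K0 κ (p.1 - p.2) - K0 κ p.1) * p.2 ^ (-α - 1))
      (volume.prod (volume.restrict (Ioi 0))) := by
  rw [← Ioc_union_Ioi_eq_Ioi zero_le_one,
    Measure.restrict_union Ioc_disjoint_Ioi_same measurableSet_Ioi, Measure.prod_add]
  exact (integrable_K0_sub_mul_rpow_prod_Ioc hα1 hκ).add_measure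
    (integrable_K0_sub_mul_rpow_prod_Ioi hα0 hκ)

theorem integral_integral_K0_sub_mul_rpow (hα0 : 0 < α) (hα1 : α < 1) (hκ : 0 < κ) :
    ∫ ξ, ∫ s in Ioi 0, (K0 κ (ξ - s) - K0 κ ξ) * s ^ (-α - 1) = 0 := by
  have hinner (s : ℝ) : ∫ ξ, (K0 κ (ξ - s) - K0 κ ξ) * s ^ (-α - 1) = 0 := by
    rw [integral_mul_const, integral_sub ((integrable_K0 hκ).comp_sub_right s) (integrable_K0 hκ),
      integral_sub_right_eq_self, sub_self, zero_mul]
  rw [integral_integral_swap (integrable_K0_sub_mul_rpow_prod hα0 hα1 hκ)]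
  simp only [hinner, integral_zero]

end Fubini

theorem Kalpha_of_nonpos {α c κ ξ : ℝ} (hα : α < 1) (hc : 0 ≤ c) (hκ : 0 < κ) (hξ : ξ ≤ 0) :
    Kalpha α c κ ξ = -((c * κ) ^ α / (2 * κ)) * exp (κ * ξ) := by
  have hintegrand : ∀ s ∈ Ioi (0 : ℝ),
      K0d κ (ξ - s) / s ^ α = exp (κ * ξ) / 2 * (s ^ ((1 - α) - 1) * exp (-(κ * s))) := by
    intro s (hs : 0 < s)
    have hneg : ξ - s < 0 := by linarith
    rw [K0d, Real.sign_of_neg hneg, abs_of_neg hneg, sub_sub_cancel_left, rpow_neg hs.le,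
      show -κ * -(ξ - s) = κ * ξ + -(κ * s) by ring, exp_add]
    field_simp
  have hκα : (1 / κ) ^ (1 - α) = κ ^ α / κ := by
    rw [one_div, inv_rpow hκ.le, rpow_sub hκ, rpow_one, inv_div]
  rw [Kalpha, setIntegral_congr_fun measurableSet_Ioi hintegrand, integral_const_mul,
    integral_rpow_mul_exp_neg_mul_Ioi (by linarith) hκ, hκα, mul_rpow hc hκ.le]
  have hΓ : Gamma (1 - α) ≠ 0 := (Gamma_pos_of_pos (by linarith)).ne'
  field_simp

theorem setIntegral_Iio_abs_Kalpha {α c κ : ℝ} (hα : α < 1) (hc : 0 ≤ c) (hκ : 0 < κ) :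
    ∫ ξ in Iio 0, |Kalpha α c κ ξ| = (c * κ) ^ α / (2 * κ ^ 2) := by
  have habs : ∀ ξ ∈ Iio (0 : ℝ), |Kalpha α c κ ξ| = (c * κ) ^ α / (2 * κ) * exp (κ * ξ) := by
    intro ξ (hξ : ξ < 0)
    rw [Kalpha_of_nonpos hα hc hκ hξ.le, neg_mul, abs_neg, abs_of_nonneg (by positivity)]
  rw [setIntegral_congr_fun measurableSet_Iio habs, integral_const_mul,
    setIntegral_congr_set Iio_ae_eq_Iic, integral_exp_mul_Iic hκ, mul_zero, exp_zero]
  field_simp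

/-- `K_α` is integrable with total integral zero, and
`∫_{-∞}^0 |K_α| = (cκ)^α/(2κ²)`. -/
theorem Kalpha_integrable_integral_zero
    (α c κ : ℝ) (hα : α ∈ Set.Ioo (0 : ℝ) 1) (hc : 0 < c) (hκ : 0 < κ) :
    Integrable (Kalpha α c κ) ∧ (∫ ξ, Kalpha α c κ ξ) = 0 ∧
      (∫ ξ in Set.Iio (0 : ℝ), |Kalpha α c κ ξ|) = (c * κ) ^ α / (2 * κ ^ 2) := by
  obtain ⟨hα0, hα1⟩ := hα
  have hK : Kalpha α c κ = fun ξ => c ^ α * α / Gamma (1 - α) *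
      ∫ s in Ioi 0, (K0 κ (ξ - s) - K0 κ ξ) * s ^ (-α - 1) :=
    funext (Kalpha_eq_mul_integral hα0 hα1 hκ c)
  refine ⟨?_, ?_, setIntegral_Iio_abs_Kalpha hα1 hc.le hκ⟩
  · rw [hK]
    exact (integrable_K0_sub_mul_rpow_prod hα0 hα1 hκ).integral_prod_left.const_mul _
  · rw [hK, integral_const_mul, integral_integral_K0_sub_mul_rpow hα0 hα1 hκ, mul_zero]
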